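/- arXiv:2507.00913 — 2 statements merged into one kernel-verified Lean document; each statement's English description precedes it below -/
import Mathlib

section
/- Let f: D^2 → A be unanimous, tops-only, and locally strategy-proof, and let (a^1, ..., a^k) be a path in the induced graph G(D) with k ≥ 3. If f(P_1, P_2) = a^1 whenever r_1(P_1) = a^1 and r_1(P_2) = a^2, then f(P_1, P_2) = a^{k-1} whenever r_1(P_1) = a^{k-1} and r_1(P_2) = a^k. -/
open Relation

/-- A preference is a ranking: a bijection from alternatives to ranks (0 = best). -/
abbrev Pref (A : Type*) [Fintype A] := A ≃ Fin (Fintype.card A)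

namespace Pref

variable {A : Type*} [Fintype A]

/-- The rank (as a natural number, 0 = best) of alternative `a` in preference `P`. -/
def rk (P : Pref A) (a : A) : ℕ := (P a : ℕ)

/-- The top-ranked alternative of `P`. -/
noncomputable def top [Nonempty A] (P : Pref A) : A := P.symm ⟨0, Fintype.card_pos⟩

/-- `a` is strictly preferred to `b` under `P`. -/
def SPrefers (P : Pref A) (a b : A) : Prop := rk P a < rk P b

/-- Two preferences are adjacent if they differ by one swap of consecutively
ranked alternatives. -/
def Adjacent (P P' : Pref A) : Prop :=
  ∃ a b : A, rk P a = rk P b + 1 ∧ rk P' a = rk P b ∧ rk P' b = rk P a ∧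
    ∀ c : A, c ≠ a → c ≠ b → rk P c = rk P' c

end Pref

open Pref

variable {A : Type*} [Fintype A] [Nonempty A]

/-- One step between members of the domain `D` along adjacent preferences. -/
def StepRel (D : Set (Pref A)) (P Q : Pref A) : Prop := P ∈ D ∧ Q ∈ D ∧ Adjacent P Q

/-- The domain `D` is connected: any two members are joined by a path of
adjacent preferences inside `D`. -/
def DConnected (D : Set (Pref A)) : Prop :=
  ∀ P ∈ D, ∀ Q ∈ D, ReflTransGen (StepRel D) P Q

/-- One step inside `D` along adjacent preferences keeping the same top. -/
def TStepRel (D : Set (Pref A)) (P Q : Pref A) : Prop :=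
  StepRel D P Q ∧ Pref.top P = Pref.top Q

/-- The top-connected closure of `P` in `D`. -/
def TCC (D : Set (Pref A)) (P : Pref A) : Set (Pref A) :=
  {Q | ReflTransGen (TStepRel D) P Q}

/-- Neighbours of a subset `S` inside the domain `D`. -/
def Nbr (D S : Set (Pref A)) : Set (Pref A) :=
  {Q | Q ∈ D ∧ Q ∉ S ∧ ∃ P ∈ S, Adjacent P Q}

/-- `D` is connected with two distinct neighbours. -/
def CDN (D : Set (Pref A)) : Prop :=
  DConnected D ∧
    ∀ P ∈ D, ∃ Q ∈ Nbr D (TCC D P), ∃ R ∈ Nbr D (TCC D P), Pref.top Q ≠ Pref.top R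

/-- Every alternative is top-ranked in some preference of `D`. -/
def MinimallyRich (D : Set (Pref A)) : Prop := ∀ a : A, ∃ P ∈ D, Pref.top P = a

/-- The edge relation of the induced graph `G(D)` on alternatives. -/
def EdgeD (D : Set (Pref A)) (a b : A) : Prop :=
  ∃ P ∈ D, ∃ P' ∈ D, Adjacent P P' ∧
    Pref.top P = a ∧ Pref.top P' = b ∧ rk P b = 1 ∧ rk P' a = 1

/-- `v 0, v 1, …, v (k-1)` is a path in the induced graph `G(D)`. -/
def IsPathD (D : Set (Pref A)) (k : ℕ) (v : ℕ → A) : Prop :=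
  (∀ i j, i < k → j < k → v i = v j → i = j) ∧
    ∀ i, i + 1 < k → EdgeD D (v i) (v (i + 1))

/-- Connected component of `P` in `D`. -/
def Component (D : Set (Pref A)) (P : Pref A) : Set (Pref A) :=
  {Q | Q ∈ D ∧ ReflTransGen (StepRel D) P Q}

section SCF

variable {n : ℕ} (D : Set (Pref A))

/-- Unanimity. -/
def Unanimous (f : (Fin n → D) → A) : Prop :=
  ∀ (P : Fin n → D) (a : A), (∀ i, Pref.top (P i : Pref A) = a) → f P = a

/-- Local strategy-proofness. -/
def LocallySP (f : (Fin n → D) → A) : Prop :=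
  ∀ (P : Fin n → D) (i : Fin n) (Q : D), Adjacent (P i : Pref A) (Q : Pref A) →
    ¬ SPrefers (P i : Pref A) (f (Function.update P i Q)) (f P)

/-- (Global) strategy-proofness. -/
def StrategyProof (f : (Fin n → D) → A) : Prop :=
  ∀ (P : Fin n → D) (i : Fin n) (Q : D),
    ¬ SPrefers (P i : Pref A) (f (Function.update P i Q)) (f P)

/-- Tops-onlyness. -/
def TopsOnly (f : (Fin n → D) → A) : Prop :=
  ∀ P P' : Fin n → D,
    (∀ i, Pref.top (P i : Pref A) = Pref.top (P' i : Pref A)) → f P = f P'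

/-- Dictatorship. -/
def Dictatorial (f : (Fin n → D) → A) : Prop :=
  ∃ i : Fin n, ∀ P : Fin n → D, f P = Pref.top (P i : Pref A)

/-- Voter `i` is decisive over `a`. -/
def Decisive (f : (Fin n → D) → A) (i : Fin n) (a : A) : Prop :=
  ∀ P : Fin n → D, Pref.top (P i : Pref A) = a → f P = a

end SCF

section AuxLemmas

variable {A : Type*} [Fintype A]

lemma rk_injective (P : Pref A) {a b : A} (h : rk P a = rk P b) : a = b :=
  P.injective (Fin.ext h)

lemma top_eq_iff_rk [Nonempty A] (P : Pref A) (a : A) :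
    Pref.top P = a ↔ rk P a = 0 := by
  constructor
  · rintro rfl; simp [Pref.top, rk]
  · intro h
    have h2 : P a = ⟨0, Fintype.card_pos⟩ := Fin.ext h
    simp [Pref.top, ← h2]

lemma adjacent_symm {P Q : Pref A} (h : Adjacent P Q) : Adjacent Q P := by
  obtain ⟨a, b, h1, h2, h3, h4⟩ := h
  exact ⟨b, a, by omega, by omega, by omega, fun c hcb hca => (h4 c hca hcb).symm⟩

lemma adj_rk_eq {P Q : Pref A} (h : Adjacent P Q) {b c x : A}
    (hb : rk P b ≠ rk Q b) (hc : rk P c ≠ rk Q c) (hbc : b ≠ c)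
    (hxb : x ≠ b) (hxc : x ≠ c) : rk P x = rk Q x := by
  obtain ⟨α, β, h1, h2, h3, h4⟩ := h
  have hbm : b = α ∨ b = β := by
    by_contra hcon
    push_neg at hcon
    exact hb (h4 b hcon.1 hcon.2)
  have hcm : c = α ∨ c = β := by
    by_contra hcon
    push_neg at hcon
    exact hc (h4 c hcon.1 hcon.2)
  have hx : x ≠ α ∧ x ≠ β := by
    rcases hbm with rfl | rfl <;> rcases hcm with rfl | rfl
    · exact absurd rfl hbc
    · exact ⟨hxb, hxc⟩
    · exact ⟨hxc, hxb⟩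
    · exact absurd rfl hbc
  exact h4 x hx.1 hx.2

lemma upd0 {D : Set (Pref A)} (x y z : D) :
    Function.update (![x, y] : Fin 2 → D) 0 z = ![z, y] := by
  funext j; fin_cases j <;> simp [Function.update]

lemma upd1 {D : Set (Pref A)} (x y z : D) :
    Function.update (![x, y] : Fin 2 → D) 1 z = ![x, z] := by
  funext j; fin_cases j <;> simp [Function.update]

end AuxLemmas

/-- Claim 2: decisiveness of voter 1 along an edge propagates along a path in
`G(D)` to its last edge. -/
theorem stmt8 {A : Type*} [Fintype A] [Nonempty A] (hA : 3 ≤ Fintype.card A)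
    (D : Set (Pref A)) (f : (Fin 2 → D) → A)
    (hu : Unanimous D f) (hto : TopsOnly D f) (hlsp : LocallySP D f)
    (k : ℕ) (hk : 3 ≤ k) (v : ℕ → A) (hpath : IsPathD D k v)
    (hbase : ∀ P : Fin 2 → D, Pref.top (P 0 : Pref A) = v 0 →
      Pref.top (P 1 : Pref A) = v 1 → f P = v 0) :
    ∀ P : Fin 2 → D, Pref.top (P 0 : Pref A) = v (k - 2) →
      Pref.top (P 1 : Pref A) = v (k - 1) → f P = v (k - 2) := by
  obtain ⟨hinj, hedge⟩ := hpath
  have hne : ∀ i j, i < k → j < k → i ≠ j → v i ≠ v j :=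
    fun i j hi hj hij h => hij (hinj i j hi hj h)
  suffices H : ∀ i, i + 1 < k → ∀ P : Fin 2 → D,
      Pref.top (P 0 : Pref A) = v i → Pref.top (P 1 : Pref A) = v (i + 1) → f P = v i by
    intro P hP0 hP1
    have hk2 : k - 2 + 1 = k - 1 := by omega
    exact H (k - 2) (by omega) P hP0 (by rw [hk2]; exact hP1)
  intro i
  induction i with
  | zero => intro _; exact hbase
  | succ i ih =>
    intro hik P hP0 hP1
    have hik' : i + 1 < k := by omega
    have IH := ih hik'
    obtain ⟨R, hR, R', hR', hadjR, htR, htR', hrR, hrR'⟩ := hedge i hik'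
    obtain ⟨Q, hQ, Q', hQ', hadjQ, htQ, htQ', hrQ, hrQ'⟩ := hedge (i + 1) hik
    set a := v i with ha
    set b := v (i + 1) with hb
    set c := v (i + 2) with hc
    have hab : a ≠ b := hne _ _ (by omega) (by omega) (by omega)
    have hac : a ≠ c := hne _ _ (by omega) (by omega) (by omega)
    have hbc : b ≠ c := hne _ _ (by omega) (by omega) (by omega)
    have hRa : rk R a = 0 := (top_eq_iff_rk R a).1 htR
    have hR'b : rk R' b = 0 := (top_eq_iff_rk R' b).1 htR'
    have hQb : rk Q b = 0 := (top_eq_iff_rk Q b).1 htQ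
    have hQ'c : rk Q' c = 0 := (top_eq_iff_rk Q' c).1 htQ'
    -- f(Q,Q) = b by unanimity
    have qq : f ![⟨Q, hQ⟩, ⟨Q, hQ⟩] = b :=
      hu _ b (fun j => by fin_cases j <;> exact htQ)
    -- SP for voter 2 at (Q,Q') deviating to Q
    have hsp1 := hlsp ![⟨Q, hQ⟩, ⟨Q', hQ'⟩] 1 ⟨Q, hQ⟩ (adjacent_symm hadjQ)
    rw [upd1] at hsp1
    simp only [SPrefers, qq, not_lt, Matrix.cons_val_one, Matrix.head_cons, Matrix.cons_val_zero] at hsp1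
    set x0 := f ![⟨Q, hQ⟩, ⟨Q', hQ'⟩] with hx0def
    -- x0 has rank ≤ 1 in Q'
    have hx0le : rk Q' x0 ≤ 1 := by omega
    have hx0 : x0 = b := by
      by_contra hne0
      have hx0c : x0 = c := by
        have : rk Q' x0 ≠ 1 := fun h => hne0 (rk_injective Q' (h.trans hrQ'.symm))
        exact rk_injective Q' (by omega)
      -- tops-only: f(R',Q') = x0 = c
      have hr'q' : f ![⟨R', hR'⟩, ⟨Q', hQ'⟩] = c := by
        have heq := hto ![⟨R', hR'⟩, ⟨Q', hQ'⟩] ![⟨Q, hQ⟩, ⟨Q', hQ'⟩]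
          (fun j => by fin_cases j <;>
            simp [Matrix.cons_val_zero, Matrix.cons_val_one, Matrix.head_cons, htR', htQ])
        rw [heq, ← hx0def, hx0c]
      -- IH: f(R,Q) = a
      have hrq : f ![⟨R, hR⟩, ⟨Q, hQ⟩] = a := IH _ (by simpa using htR) (by simpa using htQ)
      set x := f ![⟨R, hR⟩, ⟨Q', hQ'⟩] with hxdef
      -- SP voter 1 at (R',Q') deviating to R
      have s2 := hlsp ![⟨R', hR'⟩, ⟨Q', hQ'⟩] 0 ⟨R, hR⟩ (adjacent_symm hadjR)
      rw [upd0] at s2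
      simp only [SPrefers, hr'q', not_lt, Matrix.cons_val_zero, ← hxdef] at s2
      -- s2 : rk R' c ≤ rk R' x
      -- SP voter 2 at (R,Q') deviating to Q
      have s3 := hlsp ![⟨R, hR⟩, ⟨Q', hQ'⟩] 1 ⟨Q, hQ⟩ (adjacent_symm hadjQ)
      rw [upd1] at s3
      simp only [SPrefers, hrq, not_lt, Matrix.cons_val_one, Matrix.head_cons, Matrix.cons_val_zero, ← hxdef] at s3
      -- s3 : rk Q' x ≤ rk Q' a
      -- SP voter 2 at (R,Q) deviating to Q'
      have s4 := hlsp ![⟨R, hR⟩, ⟨Q, hQ⟩] 1 ⟨Q', hQ'⟩ hadjQ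
      rw [upd1] at s4
      simp only [SPrefers, hrq, not_lt, Matrix.cons_val_one, Matrix.head_cons, Matrix.cons_val_zero, ← hxdef] at s4
      -- s4 : rk Q a ≤ rk Q x
      have hR'c : 2 ≤ rk R' c := by
        have h0 : rk R' c ≠ 0 := fun h => hbc (rk_injective R' (hR'b.trans h.symm))
        have h1 : rk R' c ≠ 1 := fun h => hac (rk_injective R' (hrR'.trans h.symm))
        omega
      have hxa : x ≠ a := fun h => by rw [h] at s2; omega
      have hxb : x ≠ b := fun h => by rw [h] at s2; omega
      have hQa : 2 ≤ rk Q a := by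
        have h0 : rk Q a ≠ 0 := fun h => hab (rk_injective Q (h.trans hQb.symm))
        have h1 : rk Q a ≠ 1 := fun h => hac (rk_injective Q (h.trans hrQ.symm))
        omega
      have hxc : x ≠ c := fun h => by rw [h, hrQ] at s4; omega
      have e1 : rk Q x = rk Q' x :=
        adj_rk_eq hadjQ (by omega) (by omega) hbc hxb hxc
      have e2 : rk Q a = rk Q' a :=
        adj_rk_eq hadjQ (by omega) (by omega) hbc hab hac
      exact hxa (rk_injective Q (by omega))
    have heq := hto P ![⟨Q, hQ⟩, ⟨Q', hQ'⟩]
      (fun j => by fin_cases j <;>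
        simp [Matrix.cons_val_zero, Matrix.cons_val_one, Matrix.head_cons, hP0, hP1, htQ, htQ'])
    rw [heq, ← hx0def, hx0]
end

section
/- Let f: D^n → A be unanimous, tops-only, and locally strategy-proof, and let (a^1, ..., a^k) be a path in G(D) with k ≥ 2. Suppose P ∈ D^n satisfies f(P) = r_1(P_i), r_1(P_j) = a^1 for distinct voters i, j, and r_1(P_i) ∉ {a^1, ..., a^k}. Then for every P'_j ∈ D with r_1(P'_j) = a^k, f(P'_j, P_{-j}) = r_1(P_i). -/
open Relation

open Pref

variable {A : Type*} [Fintype A] [Nonempty A]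

lemma rk_inj' {A : Type*} [Fintype A] (P : Pref A) {a b : A} (h : rk P a = rk P b) : a = b :=
  P.injective (Fin.val_injective h)

lemma rk_top' {A : Type*} [Fintype A] [Nonempty A] (P : Pref A) : rk P (Pref.top P) = 0 := by
  simp [rk, Pref.top]

lemma adj_symm' {A : Type*} [Fintype A] {P P' : Pref A} (h : Adjacent P P') : Adjacent P' P := by
  obtain ⟨a, b, h1, h2, h3, h4⟩ := h
  exact ⟨b, a, by omega, by omega, by omega, fun c hc1 hc2 => (h4 c hc2 hc1).symm⟩

lemma step_lemma {A : Type*} [Fintype A] [Nonempty A] (D : Set (Pref A)) {n : ℕ}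
    (f : (Fin n → D) → A) (hto : TopsOnly D f) (hlsp : LocallySP D f)
    {u w x : A} (hedge : EdgeD D u w) (hxu : x ≠ u) (hxw : x ≠ w)
    (R : Fin n → D) (j : Fin n) (htopj : Pref.top (R j : Pref A) = u) (hfR : f R = x) :
    ∀ Q : D, Pref.top (Q : Pref A) = w → f (Function.update R j Q) = x := by
  obtain ⟨P1, hP1, P2, hP2, hadj, htop1, htop2, hrk1, hrk2⟩ := hedge
  set Q1 : D := ⟨P1, hP1⟩ with hQ1
  set Q2 : D := ⟨P2, hP2⟩ with hQ2
  -- ranks of u, w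
  have hu0 : rk P1 u = 0 := by rw [← htop1]; exact rk_top' P1
  have hw0 : rk P2 w = 0 := by rw [← htop2]; exact rk_top' P2
  have hu2 : rk P2 u = 1 := hrk2
  have hw1 : rk P1 w = 1 := hrk1
  -- the swap is exactly (u, w)
  have hothers : ∀ c, c ≠ w → c ≠ u → rk P1 c = rk P2 c := by
    obtain ⟨a, b, ha1, ha2, ha3, ha4⟩ := hadj
    have hbu : b = u := by
      by_contra hbu
      rcases eq_or_ne a u with rfl | hau
      · omega
      · have := ha4 u hau.symm (Ne.symm hbu); omega
    subst hbu
    have haw : a = w := by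
      apply rk_inj' P1; omega
    subst haw
    exact ha4
  -- step A : switching j to Q1 keeps the outcome (tops-only)
  have hA : f (Function.update R j Q1) = x := by
    rw [← hfR]
    apply hto
    intro m
    rcases eq_or_ne m j with rfl | hm
    · simp [Function.update_self, htopj, htop1, hQ1]
    · simp [Function.update_of_ne hm]
  -- step B : switching j to Q2
  have hB : f (Function.update R j Q2) = x := by
    set y := f (Function.update R j Q2) with hy
    have h1 := hlsp (Function.update R j Q1) j Q2 (by
      rw [Function.update_self]; exact hadj)
    rw [Function.update_idem, Function.update_self, hA] at h1
    have h2 := hlsp (Function.update R j Q2) j Q1 (by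
      rw [Function.update_self]; exact adj_symm' hadj)
    rw [Function.update_idem, Function.update_self, hA] at h2
    simp only [SPrefers, not_lt, ← hy, hQ1] at h1 h2
    change rk P2 _ ≤ rk P2 _ at h2
    -- h1 : rk P1 x ≤ rk P1 y, h2 : rk P2 y ≤ rk P2 x
    rcases eq_or_ne y u with hyu | hyu
    · have h0 : rk P1 y = 0 := by rw [hyu]; exact hu0
      exact absurd (rk_inj' P1 (by omega) : x = u) hxu
    rcases eq_or_ne y w with hyw | hyw
    · have h0 : rk P1 y = 1 := by rw [hyw]; exact hw1
      have hx0 : rk P1 x ≠ 0 := fun h => hxu (rk_inj' P1 (by omega))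
      exact absurd (rk_inj' P1 (by omega) : x = w) hxw
    · have e1 := hothers y hyw hyu
      have e2 := hothers x hxw hxu
      exact (rk_inj' P1 (by omega) : x = y).symm
  -- step C : tops-only from Q2 to Q
  intro Q hQ
  rw [← hB]
  apply hto
  intro m
  rcases eq_or_ne m j with rfl | hm
  · simp [Function.update_self, hQ, htop2, hQ2]
  · simp [Function.update_of_ne hm]

/-- Claim 7: if the outcome is voter `i`'s top and lies off a path of `G(D)`
starting at voter `j`'s top, then moving voter `j`'s top to the end of the path
does not change the outcome. -/
theorem stmt14 {A : Type*} [Fintype A] [Nonempty A] (hA : 3 ≤ Fintype.card A)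
    (D : Set (Pref A)) (n : ℕ) (hn : 2 ≤ n) (f : (Fin n → D) → A)
    (hu : Unanimous D f) (hto : TopsOnly D f) (hlsp : LocallySP D f)
    (k : ℕ) (hk : 2 ≤ k) (v : ℕ → A) (hpath : IsPathD D k v)
    (P : Fin n → D) (i j : Fin n) (hij : i ≠ j)
    (hfP : f P = Pref.top (P i : Pref A))
    (hj : Pref.top (P j : Pref A) = v 0)
    (hoff : ∀ l, l < k → v l ≠ Pref.top (P i : Pref A)) :
    ∀ Q : D, Pref.top (Q : Pref A) = v (k - 1) →
      f (Function.update P j Q) = Pref.top (P i : Pref A) := by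
  set x := Pref.top (P i : Pref A) with hx
  have key : ∀ l, l < k → ∀ Q : D, Pref.top (Q : Pref A) = v l →
      f (Function.update P j Q) = x := by
    intro l
    induction l with
    | zero =>
      intro _ Q hQ
      rw [← hfP]
      apply hto
      intro m
      rcases eq_or_ne m j with rfl | hm
      · simp only [Function.update_self]; rw [hQ, hj]
      · simp [Function.update_of_ne hm]
    | succ l ih =>
      intro hl Q hQ
      obtain ⟨P1, hP1, P2, hP2, hadj, htop1, htop2, hrk1, hrk2⟩ := hpath.2 l hl
      have hprev : f (Function.update P j ⟨P1, hP1⟩) = x := ih (by omega) ⟨P1, hP1⟩ htop1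
      have hstep := step_lemma D f hto hlsp (hpath.2 l hl)
        (Ne.symm (hoff l (by omega))) (Ne.symm (hoff (l + 1) hl))
        (Function.update P j ⟨P1, hP1⟩) j
        (by rw [Function.update_self]; exact htop1) hprev Q hQ
      rwa [Function.update_idem] at hstep
  intro Q hQ
  exact key (k - 1) (by omega) Q hQ
end
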